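/- Let V be a finite-dimensional representation of sl₂(ℂ) with standard basis (e,h,f), let a, b be integers, and let v ∈ V be a weight vector of weight b - a (i.e. h·v = (b-a)·v). Then the following are equivalent: (1) e^m · v = 0 for all integers m > a; (2) f^m · v = 0 for all integers m > b. -/

import Mathlib

/-!
The statement is invariant under `(E, H, F, a, b) ↦ (F, -H, E, b, a)`, so one implication suffices.
On a vector `w` of weight `ν` one has `[E^(k+1), F] w = (k+1)(ν+k) E^k w`. Let `u = F^M v` be the
last nonzero vector of the `F`-string through `v`, which is finite since `V` is. The identity
carries `E^(a+1) v = 0` down the string to `E^(a+1+M) u = 0`; as `F u = 0`, it also forces the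
weight `b - a - 2M` of `u` to be `-i` for some `i < a + 1 + M`. Hence `M ≤ b`.
-/

open Module

namespace Module.End

section CommRing

variable {R V : Type*} [CommRing R] [AddCommGroup V] [Module R V]

lemma apply_apply_of_lie_eq {A B C : End R V} (h : ⁅A, B⁆ = C) (w : V) :
    A (B w) = B (A w) + C w := by
  rw [← h, Ring.lie_def, LinearMap.sub_apply, mul_apply, mul_apply, add_sub_cancel]

lemma apply_pow_apply_of_lie_eq_smul {H A : End R V} {c μ : R} (hc : ⁅H, A⁆ = c • A)
    {v : V} (hv : H v = μ • v) (j : ℕ) : H ((A ^ j) v) = (μ + j * c) • (A ^ j) v := by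
  induction j with
  | zero => simpa using hv
  | succ j ih =>
    rw [pow_succ', mul_apply, apply_apply_of_lie_eq hc, ih, map_smul, LinearMap.smul_apply]
    push_cast
    module

variable {E H F : End R V} (hHE : ⁅H, E⁆ = (2 : R) • E) (hEF : ⁅E, F⁆ = H)
include hHE hEF

lemma pow_succ_apply_apply_eq {w : V} {ν : R} (hw : H w = ν • w) (k : ℕ) :
    (E ^ (k + 1)) (F w) = F ((E ^ (k + 1)) w) + ((k + 1) * (ν + k)) • (E ^ k) w := by
  induction k with
  | zero => simp [apply_apply_of_lie_eq hEF, hw]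
  | succ k ih =>
    rw [pow_succ' E (k + 1), mul_apply, ih, map_add, map_smul, apply_apply_of_lie_eq hEF,
      apply_pow_apply_of_lie_eq_smul hHE hw, ← mul_apply E, ← pow_succ', ← mul_apply E,
      ← pow_succ']
    push_cast
    module

lemma pow_succ_apply_apply_eq_zero {w : V} {ν : R} (hw : H w = ν • w) {k : ℕ}
    (hk : (E ^ k) w = 0) : (E ^ (k + 1)) (F w) = 0 := by
  rw [pow_succ_apply_apply_eq hHE hEF hw, hk, pow_succ', mul_apply, hk, map_zero, map_zero,
    smul_zero, add_zero]

lemma pow_add_apply_pow_apply_eq_zero (hHF : ⁅H, F⁆ = (-2 : R) • F) {v : V} {μ : R}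
    (hv : H v = μ • v) {k : ℕ} (hk : (E ^ k) v = 0) (j : ℕ) :
    (E ^ (k + j)) ((F ^ j) v) = 0 := by
  induction j with
  | zero => simpa using hk
  | succ j ih =>
    rw [pow_succ', mul_apply, ← add_assoc]
    exact pow_succ_apply_apply_eq_zero hHE hEF (apply_pow_apply_of_lie_eq_smul hHF hv j) ih

end CommRing

section Field

variable {K V : Type*} [Field K] [CharZero K] [AddCommGroup V] [Module K V]

lemma exists_pow_apply_eq_zero_of_lie_eq_smul [FiniteDimensional K V] {H A : End K V}
    {c μ : K} (hc0 : c ≠ 0) (hc : ⁅H, A⁆ = c • A) {v : V} (hv : H v = μ • v) :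
    ∃ N : ℕ, (A ^ N) v = 0 := by
  by_contra! hA
  have hinj : Function.Injective fun j : ℕ ↦ μ + j * c := fun i j hij ↦ by
    simpa [hc0] using hij
  exact Module.Finite.not_linearIndependent_of_infinite _ <|
    H.eigenvectors_linearIndependent' _ hinj _ fun j ↦ hasEigenvector_iff.mpr
      ⟨mem_eigenspace_iff.mpr (apply_pow_apply_of_lie_eq_smul hc hv j), hA j⟩

variable {E H F : End K V} (hHE : ⁅H, E⁆ = (2 : K) • E) (hEF : ⁅E, F⁆ = H)
include hHE hEF

lemma exists_lt_eq_neg_of_pow_apply_eq_zero {u : V} {l : K} (hu0 : u ≠ 0)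
    (hu : H u = l • u) (hFu : F u = 0) {k : ℕ} (hk : (E ^ k) u = 0) : ∃ i < k, l = -i := by
  obtain ⟨i, hi, hi1⟩ := Nat.exists_not_and_succ_of_not_zero_of_exists
    (p := fun n ↦ (E ^ n) u = 0) (by simpa using hu0) ⟨k, hk⟩
  refine ⟨i, lt_of_not_ge fun hki ↦ hi (pow_map_zero_of_le hki hk), ?_⟩
  have h := pow_succ_apply_apply_eq hHE hEF hu i
  rw [hFu, map_zero, hi1, map_zero, zero_add, eq_comm, smul_eq_zero] at h
  simpa [eq_neg_iff_add_eq_zero, Nat.cast_add_one_ne_zero, hi] using h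

theorem pow_apply_eq_zero_of_forall_pow_apply_eq_zero [FiniteDimensional K V]
    (hHF : ⁅H, F⁆ = (-2 : K) • F) {a b : ℤ} {v : V} (hv : H v = ((b - a : ℤ) : K) • v)
    (hE : ∀ m : ℕ, a < m → (E ^ m) v = 0) : ∀ m : ℕ, b < m → (F ^ m) v = 0 := by
  rcases eq_or_ne v 0 with rfl | hv0
  · simp
  lift a to ℕ using not_lt.mp fun ha ↦ hv0 (by simpa using hE 0 ha)
  obtain ⟨M, hM, hM1⟩ := Nat.exists_not_and_succ_of_not_zero_of_exists
    (p := fun n ↦ (F ^ n) v = 0) (by simpa using hv0)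
    (exists_pow_apply_eq_zero_of_lie_eq_smul (by norm_num) hHF hv)
  have hFu : F ((F ^ M) v) = 0 := by rwa [← mul_apply, ← pow_succ']
  obtain ⟨i, hi, hl⟩ := exists_lt_eq_neg_of_pow_apply_eq_zero hHE hEF hM
    (apply_pow_apply_of_lie_eq_smul hHF hv M) hFu
    (pow_add_apply_pow_apply_eq_zero hHE hEF hHF hv (hE (a + 1) (by omega)) M)
  have hweight : b - a + M * (-2) = -(i : ℤ) := by exact_mod_cast hl
  exact fun m hm ↦ pow_map_zero_of_le (by omega) hM1

end Field

end Module.End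

/-- Let `V` be a finite-dimensional complex representation of `sl₂(ℂ)`, given by endomorphisms
`E, H, F` satisfying the standard commutation relations. If `v` is a weight vector of weight
`b - a` (with `a b : ℤ`), then `E^m · v = 0` for all integers `m > a` if and only if
`F^m · v = 0` for all integers `m > b`. -/
theorem stmt_5 {V : Type*} [AddCommGroup V] [Module ℂ V] [FiniteDimensional ℂ V]
    (E H F : Module.End ℂ V)
    (hHE : ⁅H, E⁆ = (2 : ℂ) • E) (hHF : ⁅H, F⁆ = (-2 : ℂ) • F) (hEF : ⁅E, F⁆ = H)
    (a b : ℤ) (v : V) (hv : H v = (((b - a : ℤ) : ℂ)) • v) :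
    (∀ m : ℕ, a < (m : ℤ) → (E ^ m) v = 0) ↔ (∀ m : ℕ, b < (m : ℤ) → (F ^ m) v = 0) := by
  -- `neg_lie` and `lie_skew` only match `Ring.instBracket` once it is seen through this instance.
  let _ : LieRing (Module.End ℂ V) := LieRing.ofAssociativeRing
  refine ⟨End.pow_apply_eq_zero_of_forall_pow_apply_eq_zero hHE hEF hHF hv,
    End.pow_apply_eq_zero_of_forall_pow_apply_eq_zero (H := -H) ?_ ?_ ?_ ?_⟩
  · rw [neg_lie, hHF, neg_smul, neg_neg]
  · rw [← lie_skew, hEF]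
  · rw [neg_lie, hHE, ← neg_smul]
  · rw [LinearMap.neg_apply, hv, ← neg_smul, ← Int.cast_neg, neg_sub]
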